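/- arXiv:math/0310001 — 4 statements merged into one kernel-verified Lean document; each statement's English description precedes it below -/
import Mathlib

section
/- Disjoint bisectors test, quantitative form: for n ≥ 7, sinh(ρ_n)·sinh(a_n/2) > 1, where ρ_n is the circumradius and a_n the side length of the regular right-angled hyperbolic n-gon; for n = 6 equality holds: sinh(ρ_6)·sinh(a_6/2) = 1. -/
open Real

set_option maxHeartbeats 1000000 in
/-- Quantitative disjoint bisectors test: with `a_n` the side length, `r_n` the inradius
and `ρ_n` the circumradius of the regular right-angled hyperbolic `n`-gon (`n ≥ 5`),
one has `sinh ρ_n · sinh (a_n/2) > 1` for `n ≥ 7` and equality for `n = 6`. -/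
theorem disjoint_bisectors_test (n : ℕ) (hn : 5 ≤ n) (a r ρ : ℝ)
    (ha : 0 < a) (hr : 0 < r) (hρ : 0 < ρ)
    (hcosha : Real.cosh a = 1 + 2 * Real.cos (2 * π / n))
    (hcoshr : Real.cosh r = 1 / (Real.sqrt 2 * Real.sin (π / n)))
    (hcoshρ : Real.cosh ρ = Real.cosh r * Real.cosh (a / 2)) :
    (7 ≤ n → Real.sinh ρ * Real.sinh (a / 2) > 1) ∧
      (n = 6 → Real.sinh ρ * Real.sinh (a / 2) = 1) := by
  have hπ := Real.pi_pos
  have hn5 : (5:ℝ) ≤ n := by exact_mod_cast hn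
  have hn0 : (0:ℝ) < n := by linarith
  set x : ℝ := π / n with hxdef
  have hx0 : 0 < x := by positivity
  have hx5 : x ≤ π / 5 := by
    rw [hxdef]; gcongr
  have hsx : 0 < Real.sin x :=
    Real.sin_pos_of_pos_of_lt_pi hx0 (by nlinarith)
  have h2x : 2 * π / n = 2 * x := by rw [hxdef]; ring
  rw [h2x] at hcosha
  have hcos2 : Real.cos (2 * x) = 1 - 2 * Real.sin x ^ 2 := by
    rw [Real.cos_two_mul, Real.cos_sq']; ring
  have hcos2pos : 0 < Real.cos (2 * x) := by
    apply Real.cos_pos_of_mem_Ioo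
    constructor <;> [nlinarith; nlinarith]
  have hsa : 0 < Real.sinh (a / 2) := Real.sinh_pos_iff.mpr (by linarith)
  have hsρ : 0 < Real.sinh ρ := Real.sinh_pos_iff.mpr hρ
  -- cosh a in terms of cosh (a/2)
  have hcha : Real.cosh a = 2 * Real.cosh (a / 2) ^ 2 - 1 := by
    have h := Real.cosh_two_mul (a / 2)
    rw [show 2 * (a / 2) = a by ring] at h
    linarith [Real.cosh_sq (a / 2)]
  have hcs := Real.cosh_sq (a / 2)
  have hs2 : Real.sinh (a / 2) ^ 2 = Real.cos (2 * x) := by nlinarith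
  have hc2 : Real.cosh (a / 2) ^ 2 = 1 + Real.cos (2 * x) := by nlinarith
  have hsqrt2 : (Real.sqrt 2) ^ 2 = 2 := Real.sq_sqrt (by norm_num)
  have hcr2 : Real.cosh r ^ 2 = 1 / (2 * Real.sin x ^ 2) := by
    rw [hcoshr, div_pow, mul_pow, hsqrt2, one_pow]
  have hcsρ := Real.cosh_sq ρ
  have hsρ2 : Real.sinh ρ ^ 2 = Real.cos (2 * x) / Real.sin x ^ 2 := by
    have h1 : Real.sinh ρ ^ 2 = Real.cosh r ^ 2 * Real.cosh (a / 2) ^ 2 - 1 := by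
      rw [← mul_pow, ← hcoshρ]; linarith
    rw [h1, hcr2, hc2, hcos2]
    field_simp
    ring
  have hkey : Real.sinh ρ * Real.sinh (a / 2) = Real.cos (2 * x) / Real.sin x := by
    have hsq : (Real.sinh ρ * Real.sinh (a / 2)) ^ 2 = (Real.cos (2 * x) / Real.sin x) ^ 2 := by
      rw [mul_pow, hsρ2, hs2, div_pow]; ring
    have hA : 0 < Real.sinh ρ * Real.sinh (a / 2) := mul_pos hsρ hsa
    have hB : 0 < Real.cos (2 * x) / Real.sin x := div_pos hcos2pos hsx
    exact (sq_eq_sq₀ hA.le hB.le).mp hsq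
  constructor
  · intro h7
    have hn7 : (7:ℝ) ≤ n := by exact_mod_cast h7
    have hx7 : x ≤ π / 7 := by rw [hxdef]; gcongr
    have hxlt : x < π / 6 := by linarith
    have hslt : Real.sin x < 1 / 2 := by
      have h := Real.sin_lt_sin_of_lt_of_le_pi_div_two (x := x) (y := π / 6)
        (by linarith) (by linarith) hxlt
      rwa [Real.sin_pi_div_six] at h
    rw [hkey, gt_iff_lt, lt_div_iff₀ hsx, one_mul, hcos2]
    have hprod : (0:ℝ) < (1 - 2 * Real.sin x) * (1 + Real.sin x) :=
      mul_pos (by linarith) (by linarith)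
    nlinarith [hprod]
  · intro h6
    subst h6
    have hc : ((6:ℕ):ℝ) = 6 := by norm_num
    rw [hkey, hxdef, hc]
    have h1 : 2 * (π / 6) = π / 3 := by ring
    rw [h1, Real.cos_pi_div_three, Real.sin_pi_div_six]
    norm_num
end

section
/- For n ≥ 7, sinh(b_n/2)·sinh(a_n/2) > 1, where b_n is the shortest diagonal and a_n the side length of the regular right-angled hyperbolic n-gon. -/
open Real

/-- For `n ≥ 7`, `sinh (b_n/2) · sinh (a_n/2) > 1`, where `a_n` is the side length and
`b_n` the shortest diagonal of the regular right-angled hyperbolic `n`-gon. -/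
theorem diagonal_side_bisectors (n : ℕ) (hn : 7 ≤ n) (a b : ℝ)
    (ha : 0 < a) (hb : 0 < b)
    (hcosha : Real.cosh a = 1 + 2 * Real.cos (2 * π / n))
    (hcoshb : Real.cosh b = Real.cosh a ^ 2) :
    Real.sinh (b / 2) * Real.sinh (a / 2) > 1 := by
  have hπ : π < 3.1416 := by
    have := Real.pi_lt_d6; linarith
  have hπ0 : 0 < π := Real.pi_pos
  have hn7 : (7:ℝ) ≤ n := by exact_mod_cast hn
  set x : ℝ := 2 * π / n with hxdef
  have hx0 : 0 < x := by positivity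
  have hx : x ≤ 0.898 := by
    have h1 : x ≤ 2 * π / 7 := by
      apply div_le_div_of_nonneg_left (by positivity) (by norm_num) hn7
    have : 2 * π / 7 ≤ 0.898 := by nlinarith
    linarith
  -- bound cos (x/2) from below
  have hhalf : (0.899 : ℝ) ≤ Real.cos (x / 2) := by
    have hq := Real.one_sub_sq_div_two_le_cos (x := x / 2)
    nlinarith
  have hhalf1 : Real.cos (x / 2) ≤ 1 := Real.cos_le_one _
  -- cos x = 2 cos(x/2)^2 - 1
  have hdouble : Real.cos x = 2 * Real.cos (x / 2) ^ 2 - 1 := by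
    have := Real.cos_two_mul (x / 2)
    rw [show 2 * (x / 2) = x by ring] at this
    linarith
  have hcosx : (0.616 : ℝ) ≤ Real.cos x := by nlinarith
  -- sinh half-angle relations
  have hsinh : ∀ y : ℝ, Real.cosh y = 1 + 2 * Real.sinh (y / 2) ^ 2 := by
    intro y
    have h1 := Real.cosh_two_mul (y / 2)
    have h2 := Real.cosh_sq (y / 2)
    rw [show 2 * (y / 2) = y by ring] at h1
    linarith
  have hsa := hsinh a
  have hsb := hsinh b
  have hsa0 : 0 < Real.sinh (a / 2) := Real.sinh_pos_iff.2 (by linarith)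
  have hsb0 : 0 < Real.sinh (b / 2) := Real.sinh_pos_iff.2 (by linarith)
  have hca : (2.232 : ℝ) ≤ Real.cosh a := by rw [hcosha]; linarith
  set s := Real.sinh (a / 2)
  set u := Real.sinh (b / 2)
  have hsq : (u * s) ^ 2 > 1 := by nlinarith [sq_nonneg (Real.cosh a)]
  nlinarith [mul_pos hsb0 hsa0]
end

section
/- b_7 > 2ρ_6, i.e. the shortest diagonal of the regular right-angled hyperbolic heptagon is strictly longer than the diameter of the circumscribed circle of the regular right-angled hyperbolic hexagon. -/
open Real

lemma cos_two_pi_div_seven_cubic :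
    8 * Real.cos (2 * π / 7) ^ 3 + 4 * Real.cos (2 * π / 7) ^ 2
      - 4 * Real.cos (2 * π / 7) - 1 = 0 := by
  set c := Real.cos (2 * π / 7) with hc
  have hpi := Real.pi_pos
  have h1 : Real.cos (4 * (2 * π / 7)) = Real.cos (3 * (2 * π / 7)) := by
    have : (4 : ℝ) * (2 * π / 7) = 2 * π - 3 * (2 * π / 7) := by ring
    rw [this, Real.cos_sub, Real.cos_two_pi, Real.sin_two_pi]
    ring
  have h4 : Real.cos (4 * (2 * π / 7)) = 2 * (2 * c ^ 2 - 1) ^ 2 - 1 := by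
    have : (4 : ℝ) * (2 * π / 7) = 2 * (2 * (2 * π / 7)) := by ring
    rw [this, Real.cos_two_mul, Real.cos_two_mul]
  have h3 : Real.cos (3 * (2 * π / 7)) = 4 * c ^ 3 - 3 * c := Real.cos_three_mul _
  have hquartic : 8 * c ^ 4 - 4 * c ^ 3 - 8 * c ^ 2 + 3 * c + 1 = 0 := by
    have := h1
    rw [h4, h3] at this
    nlinarith [this]
  have hclt1 : c < 1 := by
    have := Real.cos_lt_cos_of_nonneg_of_le_pi (x := 0) (y := 2 * π / 7)
      le_rfl (by nlinarith) (by nlinarith)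
    simpa [Real.cos_zero] using this
  have hfac : (c - 1) * (8 * c ^ 3 + 4 * c ^ 2 - 4 * c - 1) = 0 := by
    nlinarith [hquartic]
  rcases mul_eq_zero.1 hfac with h | h
  · nlinarith
  · exact h

lemma cos_two_pi_div_seven_gt : (1 + 2 * Real.cos (2 * π / 7)) ^ 2 > 5 := by
  set c := Real.cos (2 * π / 7) with hc
  have hpi := Real.pi_pos
  have hcubic := cos_two_pi_div_seven_cubic
  have hchalf : (1 : ℝ) / 2 < c := by
    have := Real.cos_lt_cos_of_nonneg_of_le_pi (x := 2 * π / 7) (y := π / 3)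
      (by positivity) (by nlinarith) (by nlinarith)
    rw [Real.cos_pi_div_three] at this
    linarith
  -- goal reduces to c^2 + c - 1 > 0
  nlinarith [hcubic, hchalf, sq_nonneg (8 * c - 5), sq_nonneg (c - 5/8)]

/-- `b_7 > 2 ρ_6`: the shortest diagonal of the regular right-angled hyperbolic heptagon
is strictly longer than the diameter of the circumscribed circle of the regular
right-angled hyperbolic hexagon. -/
theorem heptagon_diagonal_gt_hexagon_diameter (a7 b7 a6 r6 ρ6 : ℝ)
    (ha7 : 0 < a7) (hb7 : 0 < b7) (ha6 : 0 < a6) (hr6 : 0 < r6) (hρ6 : 0 < ρ6)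
    (hcosha7 : Real.cosh a7 = 1 + 2 * Real.cos (2 * π / 7))
    (hcoshb7 : Real.cosh b7 = Real.cosh a7 ^ 2)
    (hcosha6 : Real.cosh a6 = 1 + 2 * Real.cos (2 * π / 6))
    (hcoshr6 : Real.cosh r6 = 1 / (Real.sqrt 2 * Real.sin (π / 6)))
    (hcoshρ6 : Real.cosh ρ6 = Real.cosh r6 * Real.cosh (a6 / 2)) :
    b7 > 2 * ρ6 := by
  have hs2 : Real.sqrt 2 ^ 2 = 2 := Real.sq_sqrt (by norm_num)
  have hs2pos : (0 : ℝ) < Real.sqrt 2 := Real.sqrt_pos.2 (by norm_num)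
  -- cosh a6 = 2
  have ha6v : Real.cosh a6 = 2 := by
    rw [hcosha6]
    have : (2 : ℝ) * π / 6 = π / 3 := by ring
    rw [this, Real.cos_pi_div_three]; norm_num
  -- cosh r6 ^ 2 = 2
  have hr6v : Real.cosh r6 ^ 2 = 2 := by
    rw [hcoshr6, Real.sin_pi_div_six, div_pow, mul_pow, hs2]
    norm_num
  -- cosh (a6/2) ^ 2 = 3/2
  have hhalf : Real.cosh (a6 / 2) ^ 2 = 3 / 2 := by
    have h2 : Real.cosh (2 * (a6 / 2)) = 2 * Real.cosh (a6 / 2) ^ 2 - 1 := by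
      rw [Real.cosh_two_mul, Real.sinh_sq]; ring
    have : (2 : ℝ) * (a6 / 2) = a6 := by ring
    rw [this, ha6v] at h2
    linarith
  -- cosh ρ6 ^ 2 = 3
  have hρv : Real.cosh ρ6 ^ 2 = 3 := by
    rw [hcoshρ6, mul_pow, hr6v, hhalf]; norm_num
  -- cosh (2 ρ6) = 5
  have h2ρ : Real.cosh (2 * ρ6) = 5 := by
    rw [Real.cosh_two_mul, Real.sinh_sq, hρv]; ring
  -- cosh b7 > 5
  have hb7v : Real.cosh b7 > 5 := by
    rw [hcoshb7, hcosha7]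
    exact cos_two_pi_div_seven_gt
  have : Real.cosh (2 * ρ6) < Real.cosh b7 := by rw [h2ρ]; exact hb7v
  have habs : |2 * ρ6| < |b7| := Real.cosh_lt_cosh.1 this
  rw [abs_of_pos (by linarith), abs_of_pos hb7] at habs
  exact habs
end

section
/- sinh²(b_5/2)·cosh(a_5) > 1, where a_5 is the side length and b_5 the diagonal of the regular right-angled hyperbolic pentagon. -/
open Real

/-- `sinh² (b₅/2) · cosh a₅ > 1`, where `a₅` is the side length and `b₅` the diagonal of
the regular right-angled hyperbolic pentagon. -/
theorem pentagon_inequality (a b : ℝ) (ha : 0 < a) (hb : 0 < b)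
    (hcosha : Real.cosh a = 1 + 2 * Real.cos (2 * π / 5))
    (hcoshb : Real.cosh b = Real.cosh a ^ 2) :
    Real.sinh (b / 2) ^ 2 * Real.cosh a > 1 := by
  have hcos2 : Real.cos (2 * π / 5) = 2 * Real.cos (π / 5) ^ 2 - 1 := by
    rw [show (2 : ℝ) * π / 5 = 2 * (π / 5) by ring, Real.cos_two_mul]
  have h5 : Real.sqrt 5 ^ 2 = 5 := Real.sq_sqrt (by norm_num)
  have h5lb : Real.sqrt 5 > 2.2 := by
    nlinarith [Real.sq_sqrt (show (5:ℝ) ≥ 0 by norm_num), Real.sqrt_nonneg 5]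
  have hc : Real.cosh a = (1 + Real.sqrt 5) / 2 := by
    rw [hcosha, hcos2, Real.cos_pi_div_five]; nlinarith [h5]
  have hsinh : Real.cosh b = 2 * Real.sinh (b / 2) ^ 2 + 1 := by
    rw [show b = 2 * (b / 2) by ring, Real.cosh_two_mul, Real.cosh_sq]
    ring_nf
  have key : Real.sinh (b / 2) ^ 2 = (Real.cosh a ^ 2 - 1) / 2 := by
    rw [← hcoshb, hsinh]; ring
  rw [key, hc]
  nlinarith [h5, h5lb]
end
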